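/- arXiv:math/0406266 — 2 statements merged into one kernel-verified Lean document; each statement's English description precedes it below -/
import Mathlib

section
/- Let h : [0,∞) → [0,∞) be continuous and let δ : [0,T] → ℝ satisfy δ(t) ≥ (h * δ)(t) = ∫₀ᵗ h(t-s) δ(s) ds for all t ∈ [0,T]. Then δ(t) ≥ 0 for all t ∈ [0,T]. -/
open MeasureTheory

/-- If `h : [0,∞) → [0,∞)` is continuous and `δ : [0,T] → ℝ` satisfies
`δ(t) ≥ (h * δ)(t) = ∫₀ᵗ h(t-s) δ(s) ds` for all `t ∈ [0,T]`, then `δ ≥ 0` on `[0,T]`. -/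
theorem stmt0 (T : ℝ) (hT : 0 ≤ T) (h δ : ℝ → ℝ)
    (hc : Continuous h) (hpos : ∀ t, 0 ≤ t → 0 ≤ h t)
    (hδc : ContinuousOn δ (Set.Icc 0 T))
    (hconv : ∀ t ∈ Set.Icc (0:ℝ) T, ∫ s in (0:ℝ)..t, h (t - s) * δ s ≤ δ t) :
    ∀ t ∈ Set.Icc (0:ℝ) T, 0 ≤ δ t := by
  -- continuous extension of δ
  set d : ℝ → ℝ := fun t => δ (max 0 (min t T)) with hd
  have hmem : ∀ t : ℝ, max 0 (min t T) ∈ Set.Icc (0:ℝ) T := by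
    intro t
    constructor
    · exact le_max_left _ _
    · exact max_le hT (min_le_right _ _)
  have hdc : Continuous d :=
    hδc.comp_continuous (continuous_const.max (continuous_id.min continuous_const)) hmem
  have hdeq : ∀ t ∈ Set.Icc (0:ℝ) T, d t = δ t := by
    intro t ht
    simp only [hd]
    rw [min_eq_left ht.2, max_eq_right ht.1]
  -- negative part
  set φ : ℝ → ℝ := fun t => max (-d t) 0 with hφ
  have hφc : Continuous φ := (hdc.neg).max continuous_const
  have hφ0 : ∀ t, 0 ≤ φ t := fun t => le_max_right _ _
  set ψ : ℝ → ℝ := fun t => ∫ s in (0:ℝ)..t, φ s with hψ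
  -- H = max of h on [0,T]
  obtain ⟨x0, hx0, hxm⟩ := (isCompact_Icc (a := (0:ℝ)) (b := T)).exists_isMaxOn
      (Set.nonempty_Icc.2 hT) hc.continuousOn
  set H := h x0 with hH
  have hHmax : ∀ y ∈ Set.Icc (0:ℝ) T, h y ≤ H := fun y hy => hxm hy
  have hH0 : 0 ≤ H := hpos x0 hx0.1
  have hψderiv : ∀ t : ℝ, HasDerivAt ψ (φ t) t := by
    intro t
    exact intervalIntegral.integral_hasDerivAt_right
      (hφc.intervalIntegrable 0 t) (hφc.stronglyMeasurableAtFilter _ _)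
      hφc.continuousAt
  have hψ0 : ∀ t, 0 ≤ t → 0 ≤ ψ t := by
    intro t ht
    exact intervalIntegral.integral_nonneg ht fun s _ => hφ0 s
  -- key inequality
  have key : ∀ t ∈ Set.Icc (0:ℝ) T, φ t ≤ H * ψ t := by
    intro t ht
    have ht0 := ht.1
    have h1 : ∫ s in (0:ℝ)..t, h (t - s) * δ s = ∫ s in (0:ℝ)..t, h (t - s) * d s := by
      apply intervalIntegral.integral_congr
      intro s hs
      rw [Set.uIcc_of_le ht0] at hs
      show h (t - s) * δ s = h (t - s) * d s
      rw [hdeq s ⟨hs.1, hs.2.trans ht.2⟩]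
    have h2 : ∀ s ∈ Set.Icc (0:ℝ) t, h (t - s) * (-d s) ≤ H * φ s := by
      intro s hs
      have hts : (0:ℝ) ≤ t - s := sub_nonneg.2 hs.2
      have hhts : 0 ≤ h (t - s) := hpos _ hts
      have hle : h (t - s) ≤ H := hHmax _ ⟨hts, by linarith [ht.2, hs.1]⟩
      calc h (t - s) * (-d s) ≤ h (t - s) * φ s :=
            mul_le_mul_of_nonneg_left (le_max_left _ _) hhts
        _ ≤ H * φ s := mul_le_mul_of_nonneg_right hle (hφ0 s)
    have h3 : -δ t ≤ H * ψ t := by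
      have := hconv t ht
      have hneg : -δ t ≤ ∫ s in (0:ℝ)..t, h (t - s) * (-d s) := by
        have : -δ t ≤ -∫ s in (0:ℝ)..t, h (t - s) * d s := by
          rw [← h1]; linarith [hconv t ht]
        rwa [← intervalIntegral.integral_neg, show (fun s => -(h (t - s) * d s))
          = fun s => h (t - s) * (-d s) by funext s; ring] at this
      have hint1 : IntervalIntegrable (fun s => h (t - s) * (-d s)) volume 0 t :=
        ((hc.comp (continuous_const.sub continuous_id)).mul hdc.neg).intervalIntegrable 0 t
      have hint2 : IntervalIntegrable (fun s => H * φ s) volume 0 t :=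
        (continuous_const.mul hφc).intervalIntegrable 0 t
      have hmono := intervalIntegral.integral_mono_on ht0 hint1 hint2 h2
      have hHψ : ∫ s in (0:ℝ)..t, H * φ s = H * ψ t := by
        simp [hψ, intervalIntegral.integral_const_mul]
      linarith
    have hdt : d t = δ t := hdeq t ht
    have hHψ0 : 0 ≤ H * ψ t := mul_nonneg hH0 (hψ0 t ht0)
    simp only [hφ]
    rw [hdt]
    exact max_le h3 hHψ0
  -- Gronwall
  have hgron : ∀ t ∈ Set.Icc (0:ℝ) T, ‖ψ t‖ ≤ gronwallBound 0 H 0 (t - 0) := by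
    apply norm_le_gronwallBound_of_norm_deriv_right_le
      (f := ψ) (f' := φ) (a := 0) (b := T)
    · exact fun t _ => (hψderiv t).continuousAt.continuousWithinAt
    · exact fun t _ => (hψderiv t).hasDerivWithinAt
    · simp [hψ]
    · intro t ht
      have ht' : t ∈ Set.Icc (0:ℝ) T := ⟨ht.1, le_of_lt ht.2⟩
      have := key t ht'
      rw [Real.norm_eq_abs, Real.norm_eq_abs, abs_of_nonneg (hφ0 t),
        abs_of_nonneg (hψ0 t ht.1)]
      linarith
  intro t ht
  have hψt : ψ t = 0 := by
    have := hgron t ht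
    rw [gronwallBound_ε0_δ0] at this
    have := hψ0 t ht.1
    have h2 : |ψ t| ≤ 0 := by rwa [Real.norm_eq_abs] at *
    linarith [abs_nonneg (ψ t), le_abs_self (ψ t), neg_abs_le (ψ t)]
  have hφt : φ t ≤ 0 := by
    have := key t ht
    rw [hψt] at this
    linarith
  have : -δ t ≤ φ t := by
    simp only [hφ]
    rw [hdeq t ht]
    exact le_max_left _ _
  linarith
end

section
/- Let R(μ) = (2π)^{-d} ∫_{[-π,π]^d} dk/(μ + φ̂(k)) for μ > 0 with φ̂ as the symbol of the discrete Laplacian. Then 2[R'(μ)]² − R(μ)R''(μ) < 0 for all μ > 0. -/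
set_option maxHeartbeats 1000000


open MeasureTheory Real

/-- The Fourier symbol `φ̂(k) = Σ_{‖x‖=1, x∈ℤ^d} (1 - cos(k·x))`, written as the sum
over the unit vectors `±e_i`. -/
noncomputable def phiHat (d : ℕ) (k : Fin d → ℝ) : ℝ :=
  ∑ i, ((1 - Real.cos (k i)) + (1 - Real.cos (-(k i))))

/-- The Brillouin zone `[-π,π]^d`. -/
def walkBox (d : ℕ) : Set (Fin d → ℝ) := Set.univ.pi fun _ => Set.Icc (-π) π

lemma phiHat_nonneg (d : ℕ) (k : Fin d → ℝ) : 0 ≤ phiHat d k := by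
  apply Finset.sum_nonneg
  intro i _
  have h1 := Real.cos_le_one (k i)
  have h2 := Real.cos_le_one (-(k i))
  linarith

lemma phiHat_continuous (d : ℕ) : Continuous (phiHat d) := by
  unfold phiHat
  exact continuous_finset_sum _ fun i _ => by fun_prop

lemma walkBox_compact (d : ℕ) : IsCompact (walkBox d) :=
  isCompact_univ_pi fun _ => isCompact_Icc

theorem key (d : ℕ) (hd : 1 ≤ d) (μ : ℝ) (hμ : 0 < μ) :
    (∫ k in walkBox d, ((μ + phiHat d k) ^ 2)⁻¹) ^ 2 <
      (∫ k in walkBox d, (μ + phiHat d k)⁻¹) *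
        ∫ k in walkBox d, ((μ + phiHat d k) ^ 3)⁻¹ := by
  set f : (Fin d → ℝ) → ℝ := fun k => (μ + phiHat d k)⁻¹ with hf
  have hden : ∀ k, 0 < μ + phiHat d k := fun k => by
    have := phiHat_nonneg d k; linarith
  have hfpos : ∀ k, 0 < f k := fun k => inv_pos.2 (hden k)
  have hfc : Continuous f := by
    apply Continuous.inv₀
    · exact continuous_const.add (phiHat_continuous d)
    · exact fun k => (hden k).ne'
  have hInt : ∀ n : ℕ, IntegrableOn (fun k => f k ^ n) (walkBox d) volume :=
    fun n => (hfc.pow n).continuousOn.integrableOn_compact (walkBox_compact d)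
  -- rewrite the integrands as powers of f
  have e2 : (∫ k in walkBox d, ((μ + phiHat d k) ^ 2)⁻¹) = ∫ k in walkBox d, f k ^ 2 := by
    congr 1; ext k; rw [hf]; rw [inv_pow]
  have e3 : (∫ k in walkBox d, ((μ + phiHat d k) ^ 3)⁻¹) = ∫ k in walkBox d, f k ^ 3 := by
    congr 1; ext k; rw [hf]; rw [inv_pow]
  rw [e2, e3]
  set I1 := ∫ k in walkBox d, f k with hI1
  set I2 := ∫ k in walkBox d, f k ^ 2 with hI2
  set I3 := ∫ k in walkBox d, f k ^ 3 with hI3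
  have hI1' : I1 = ∫ k in walkBox d, f k ^ 1 := by simp [hI1]
  -- the double integral
  set g : ((Fin d → ℝ) × (Fin d → ℝ)) → ℝ :=
    fun p => f p.1 * f p.2 * (f p.1 - f p.2) ^ 2 with hg
  have hgc : Continuous g := by fun_prop
  have hSS : IsCompact ((walkBox d) ×ˢ (walkBox d)) :=
    (walkBox_compact d).prod (walkBox_compact d)
  have hgint : IntegrableOn g ((walkBox d) ×ˢ (walkBox d)) volume :=
    hgc.continuousOn.integrableOn_compact hSS
  have prodInt : ∀ m n : ℕ,
      IntegrableOn (fun p : (Fin d → ℝ) × (Fin d → ℝ) => f p.1 ^ m * f p.2 ^ n)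
        ((walkBox d) ×ˢ (walkBox d)) volume := fun m n =>
    (((hfc.comp continuous_fst).pow m).mul
      ((hfc.comp continuous_snd).pow n)).continuousOn.integrableOn_compact hSS
  have hprodeq : ∀ m n : ℕ,
      (∫ p in (walkBox d) ×ˢ (walkBox d), f p.1 ^ m * f p.2 ^ n) =
        (∫ k in walkBox d, f k ^ m) * ∫ k in walkBox d, f k ^ n := by
    intro m n
    rw [Measure.volume_eq_prod]
    exact setIntegral_prod_mul (fun x => f x ^ m) (fun y => f y ^ n) _ _
  have hsplit : (∫ p in (walkBox d) ×ˢ (walkBox d), g p) = 2 * (I1 * I3) - 2 * I2 ^ 2 := by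
    have hgeq : ∀ p : (Fin d → ℝ) × (Fin d → ℝ),
        g p = f p.1 ^ 1 * f p.2 ^ 3 + f p.1 ^ 3 * f p.2 ^ 1 - 2 * (f p.1 ^ 2 * f p.2 ^ 2) := by
      intro p; rw [hg]; ring
    rw [show (fun p : (Fin d → ℝ) × (Fin d → ℝ) => g p) = fun p =>
        f p.1 ^ 1 * f p.2 ^ 3 + f p.1 ^ 3 * f p.2 ^ 1 - 2 * (f p.1 ^ 2 * f p.2 ^ 2) from
      funext hgeq]
    have hA : IntegrableOn (fun p : (Fin d → ℝ) × (Fin d → ℝ) =>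
        f p.1 ^ 1 * f p.2 ^ 3 + f p.1 ^ 3 * f p.2 ^ 1) ((walkBox d) ×ˢ (walkBox d)) volume :=
      (prodInt 1 3).add (prodInt 3 1)
    have hB : IntegrableOn (fun p : (Fin d → ℝ) × (Fin d → ℝ) =>
        2 * (f p.1 ^ 2 * f p.2 ^ 2)) ((walkBox d) ×ˢ (walkBox d)) volume :=
      (prodInt 2 2).const_mul 2
    rw [integral_sub hA hB, integral_add (prodInt 1 3) (prodInt 3 1), integral_const_mul,
      hprodeq, hprodeq, hprodeq]
    rw [← hI1', ← hI2, ← hI3]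
    ring
  -- positivity of the double integral
  have hpos : 0 < ∫ p in (walkBox d) ×ˢ (walkBox d), g p := by
    have hgnn : ∀ p : (Fin d → ℝ) × (Fin d → ℝ), 0 ≤ g p := fun p =>
      mul_nonneg (mul_nonneg (hfpos p.1).le (hfpos p.2).le) (sq_nonneg _)
    have hae : 0 ≤ᵐ[volume.restrict ((walkBox d) ×ˢ (walkBox d))] g :=
      Filter.Eventually.of_forall hgnn
    refine (setIntegral_pos_iff_support_of_nonneg_ae hae hgint).2 ?_
    set i0 : Fin d := ⟨0, hd⟩ with hi0
    set x0 : Fin d → ℝ := fun _ => 0 with hx0def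
    set y0 : Fin d → ℝ := fun i => if i = i0 then π / 2 else 0 with hy0def
    have hx0 : phiHat d x0 = 0 := by simp [phiHat, hx0def]
    have hy0 : phiHat d y0 = 2 := by
      rw [phiHat, Finset.sum_eq_single i0]
      · simp [hy0def, Real.cos_pi_div_two]; norm_num
      · intro b _ hb; simp [hy0def, hb]
      · intro h; exact absurd (Finset.mem_univ i0) h
    have hgp0 : 0 < g (x0, y0) := by
      have hval : g (x0, y0) = μ⁻¹ * (μ + 2)⁻¹ * (μ⁻¹ - (μ + 2)⁻¹) ^ 2 := by
        simp [hg, hf, hx0, hy0]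
      rw [hval]
      have hlt : (μ + 2)⁻¹ < μ⁻¹ := by
        apply inv_strictAnti₀ hμ; linarith
      have h1 : 0 < μ⁻¹ := inv_pos.2 hμ
      have h2 : 0 < (μ + 2)⁻¹ := inv_pos.2 (by linarith)
      have h3 : 0 < μ⁻¹ - (μ + 2)⁻¹ := sub_pos.2 hlt
      positivity
    have hintS : interior (walkBox d) = Set.univ.pi fun _ : Fin d => Set.Ioo (-π) π := by
      rw [walkBox, interior_pi_set Set.finite_univ]
      simp [interior_Icc]
    have hmemx : x0 ∈ interior (walkBox d) := by
      rw [hintS]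
      intro i _
      constructor <;> simp [hx0def] <;> positivity
    have hmemy : y0 ∈ interior (walkBox d) := by
      rw [hintS]
      intro i _
      by_cases h : i = i0 <;>
        simp only [hy0def, h, if_true, if_false, Set.mem_Ioo] <;>
        constructor <;> nlinarith [pi_pos]
    set W : Set ((Fin d → ℝ) × (Fin d → ℝ)) :=
      {p | 0 < g p} ∩ (interior (walkBox d)) ×ˢ (interior (walkBox d)) with hW
    have hWopen : IsOpen W :=
      (isOpen_lt continuous_const hgc).inter (isOpen_interior.prod isOpen_interior)
    have hWne : W.Nonempty := ⟨(x0, y0), hgp0, hmemx, hmemy⟩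
    have hWpos : 0 < volume W := hWopen.measure_pos volume hWne
    refine lt_of_lt_of_le hWpos (measure_mono ?_)
    rintro p ⟨hp1, hp2, hp3⟩
    exact ⟨ne_of_gt hp1, interior_subset hp2, interior_subset hp3⟩
  nlinarith [hpos, hsplit]

/-- With `R(μ) = (2π)^{-d} ∫ dk/(μ+φ̂)`, `R'(μ) = −(2π)^{-d} ∫ dk/(μ+φ̂)²`,
`R''(μ) = 2(2π)^{-d} ∫ dk/(μ+φ̂)³`, one has `2[R'(μ)]² − R(μ)R''(μ) < 0` for `μ > 0`. -/
theorem stmt6 (d : ℕ) (hd : 1 ≤ d) (μ : ℝ) (hμ : 0 < μ) :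
    2 * (-(((2 * π) ^ d)⁻¹ * ∫ k in walkBox d, ((μ + phiHat d k) ^ 2)⁻¹)) ^ 2 -
        (((2 * π) ^ d)⁻¹ * ∫ k in walkBox d, (μ + phiHat d k)⁻¹) *
          (2 * (((2 * π) ^ d)⁻¹ * ∫ k in walkBox d, ((μ + phiHat d k) ^ 3)⁻¹)) < 0 := by
  have hc : 0 < ((2 * π) ^ d)⁻¹ := by positivity
  have hk := key d hd μ hμ
  set c := ((2 * π) ^ d)⁻¹
  set I1 := ∫ k in walkBox d, (μ + phiHat d k)⁻¹
  set I2 := ∫ k in walkBox d, ((μ + phiHat d k) ^ 2)⁻¹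
  set I3 := ∫ k in walkBox d, ((μ + phiHat d k) ^ 3)⁻¹
  nlinarith [mul_pos hc hc, mul_pos (mul_pos hc hc) (sub_pos.2 hk)]
end
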